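/- arXiv:2303.09489 — 3 statements merged into one kernel-verified Lean document; each statement's English description precedes it below -/
import Mathlib

section
/- Let A be the d×d shift matrix, B = e_1 the first standard basis vector, and C = (φ_1, …, φ_d) a row vector. Consider the state-space recursion x_{k+1} = A x_k + B u_k with x_0 = 0 and output y_k = C x_k. If the input satisfies u_k = y_k for all k (the SSM is driven by its own outputs), then for every k ≥ d, y_k = Σ_{i=1}^{d} φ_i y_{k-i}; that is, the system realizes the noiseless AR(d) autoregressive process with coefficients φ_1, …, φ_d. -/
/-!
Driving the shift register with `B = e₁` pushes the input into the first coordinate and moves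
every other coordinate one step down, so after `k ≥ d` steps the state is exactly the last `d`
inputs, `x k j = u (k - 1 - j)`. Hence `y k = φ ⬝ᵥ x k` is the
`φ`-weighted sum of the last `d` inputs, which are the last `d` outputs.
-/

open Matrix

/-- The `d × d` shift matrix over `ℝ`. -/
def shiftMatrix (d : ℕ) : Matrix (Fin d) (Fin d) ℝ :=
  Matrix.of fun i j => if (i : ℕ) = (j : ℕ) + 1 then 1 else 0

section ShiftMatrix

variable {d : ℕ}

theorem shiftMatrix_mulVec_apply_of_val_eq_zero (v : Fin d → ℝ) {i : Fin d}
    (hi : (i : ℕ) = 0) : (shiftMatrix d *ᵥ v) i = 0 := by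
  simp [shiftMatrix, mulVec, dotProduct, hi]

theorem shiftMatrix_mulVec_apply_of_val_eq_succ (v : Fin d → ℝ) {i j : Fin d}
    (hij : (i : ℕ) = j + 1) : (shiftMatrix d *ᵥ v) i = v j := by
  simp [shiftMatrix, mulVec, dotProduct, hij, Fin.val_inj]

theorem shift_state_apply_eq_input (hd : 0 < d) (u : ℕ → ℝ) (x : ℕ → Fin d → ℝ)
    (hx : ∀ k, x (k + 1) = shiftMatrix d *ᵥ x k + u k • Pi.single ⟨0, hd⟩ 1) :
    ∀ k (j : Fin d), (j : ℕ) < k → x k j = u (k - 1 - j) := by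
  intro k
  induction k with
  | zero => intro j hj; omega
  | succ k ih =>
    intro j hj
    rw [hx k, Pi.add_apply, Pi.smul_apply, smul_eq_mul]
    obtain ⟨m, hm⟩ | hj0 : (∃ m, (j : ℕ) = m + 1) ∨ (j : ℕ) = 0 := by
      rcases (j : ℕ) with _ | m <;> simp
    · have hjm : j ≠ ⟨0, hd⟩ := fun h => by simp [h] at hm
      rw [shiftMatrix_mulVec_apply_of_val_eq_succ (j := ⟨m, by omega⟩) _ hm,
        ih _ (by simp; omega), Pi.single_eq_of_ne hjm, mul_zero, add_zero, hm]
      congr 1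
      simp only
      omega
    · obtain rfl : j = ⟨0, hd⟩ := Fin.ext hj0
      simp [shiftMatrix_mulVec_apply_of_val_eq_zero]

end ShiftMatrix

theorem stmt_4_general (d : ℕ) (hd : 0 < d) (φ : Fin d → ℝ)
    (u y : ℕ → ℝ) (x : ℕ → Fin d → ℝ)
    (hx : ∀ k, x (k + 1) = (shiftMatrix d).mulVec (x k)
        + u k • (Pi.single (⟨0, hd⟩ : Fin d) 1 : Fin d → ℝ))
    (hy : ∀ k, y k = φ ⬝ᵥ x k)
    (hu : ∀ k, u k = y k) :
    ∀ k, d ≤ k → y k = ∑ i : Fin d, φ i * y (k - 1 - (i : ℕ)) := by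
  intro k hk
  rw [hy k, dotProduct]
  refine Finset.sum_congr rfl fun i _ => ?_
  rw [shift_state_apply_eq_input hd u x hx k i (by omega), hu]

/-- The shift-matrix SSM with `B = e₁`, `C = φ`, driven by its own outputs,
realizes the noiseless AR(d) process `y k = ∑ i, φ i * y (k - 1 - i)`. -/
theorem stmt_4 (d : ℕ) (hd : 0 < d) (φ : Fin d → ℝ)
    (u y : ℕ → ℝ) (x : ℕ → Fin d → ℝ)
    (hx0 : x 0 = 0)
    (hx : ∀ k, x (k + 1) = (shiftMatrix d).mulVec (x k)
        + u k • (Pi.single (⟨0, hd⟩ : Fin d) 1 : Fin d → ℝ))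
    (hy : ∀ k, y k = φ ⬝ᵥ x k)
    (hu : ∀ k, u k = y k) :
    ∀ k, d ≤ k → y k = ∑ i : Fin d, φ i * y (k - 1 - (i : ℕ)) :=
  stmt_4_general d hd φ u y x hx hy hu
end

section
/- Let A ∈ ℝ^{d×d}, B ∈ ℝ^d, and suppose the Krylov matrix K = [B, AB, A²B, …, A^{d-1}B] is invertible (i.e., the pair (A,B) is controllable). Then G := K^{-1} A K is a companion matrix. That is, every controllable single-input linear system is similar to one in companion form. -/
/-!
Column `j` of `K = [B, AB, …, A^(d-1)B]` is `A^j B`, so column `j` of `A K` is column `j + 1`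
of `K` for `j < d - 1`, and its last column `A^d B` equals `K c` for `c := K⁻¹ A^d B`.
Right multiplication by `companion c` performs exactly this shift and appends `K c`,
hence `A K = K (companion c)`.
-/

/-- The companion matrix with last column `a`, over `ℝ`. -/
def companion {d : ℕ} (a : Fin d → ℝ) : Matrix (Fin d) (Fin d) ℝ :=
  Matrix.of fun i j =>
    if (i : ℕ) = (j : ℕ) + 1 then 1 else if (j : ℕ) = d - 1 then a i else 0

open scoped Matrix

def krylov {R n : Type*} [Semiring R] [Fintype n] [DecidableEq n] {m : ℕ}
    (A : Matrix n n R) (B : n → R) : Matrix n (Fin m) R :=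
  Matrix.of fun i j => (A ^ (j : ℕ) *ᵥ B) i

theorem mul_krylov_apply {R n : Type*} [Semiring R] [Fintype n] [DecidableEq n] {m : ℕ}
    (A : Matrix n n R) (B : n → R) (i : n) (j : Fin m) :
    (A * krylov A B) i j = (A ^ ((j : ℕ) + 1) *ᵥ B) i := by
  rw [pow_succ', ← Matrix.mulVec_mulVec, Matrix.mul_apply]
  rfl

section Companion

variable {d : ℕ} (M : Matrix (Fin d) (Fin d) ℝ) (c : Fin d → ℝ)

theorem mul_companion_apply_of_lt {i j : Fin d} (h : (j : ℕ) + 1 < d) :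
    (M * companion c) i j = M i ⟨(j : ℕ) + 1, h⟩ := by
  rw [Matrix.mul_apply, Finset.sum_eq_single ⟨(j : ℕ) + 1, h⟩]
  · simp [companion]
  · intro k _ hk
    have hk' : (k : ℕ) ≠ (j : ℕ) + 1 := fun e => hk (Fin.ext e)
    simp [companion, hk', show (j : ℕ) ≠ d - 1 by omega]
  · simp

theorem mul_companion_apply_last {i j : Fin d} (h : (j : ℕ) = d - 1) :
    (M * companion c) i j = (M *ᵥ c) i := by
  rw [Matrix.mul_apply]
  refine Finset.sum_congr rfl fun k _ => ?_
  have hk : (k : ℕ) ≠ d - 1 + 1 := by omega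
  simp [companion, hk, h]

end Companion

theorem mul_krylov_eq_krylov_mul_companion {d : ℕ} (A : Matrix (Fin d) (Fin d) ℝ)
    (B : Fin d → ℝ) {c : Fin d → ℝ} (hc : krylov A B *ᵥ c = A ^ d *ᵥ B) :
    A * krylov A B = krylov A B * companion c := by
  ext i j
  rw [mul_krylov_apply]
  by_cases hj : (j : ℕ) + 1 < d
  · rw [mul_companion_apply_of_lt _ _ hj]
    rfl
  · rw [mul_companion_apply_last _ _ (by omega), hc, show (j : ℕ) + 1 = d by omega]

/-- Every controllable single-input system is similar to companion form:
if the Krylov matrix `K = [B, AB, …, A^(d-1)B]` is invertible, then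
`K⁻¹ A K` is a companion matrix. -/
theorem stmt_9 (d : ℕ) (A : Matrix (Fin d) (Fin d) ℝ) (B : Fin d → ℝ)
    (hK : IsUnit (Matrix.of fun i j : Fin d => (A ^ (j : ℕ)).mulVec B i)) :
    ∃ c : Fin d → ℝ,
      (Matrix.of fun i j : Fin d => (A ^ (j : ℕ)).mulVec B i)⁻¹ * A *
        (Matrix.of fun i j : Fin d => (A ^ (j : ℕ)).mulVec B i) = companion c := by
  change ∃ c, (krylov A B)⁻¹ * A * krylov A B = companion c
  have hdet : IsUnit (krylov A B).det := (Matrix.isUnit_iff_isUnit_det _).mp hK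
  refine ⟨(krylov A B)⁻¹ *ᵥ (A ^ d *ᵥ B), ?_⟩
  have hc : krylov A B *ᵥ ((krylov A B)⁻¹ *ᵥ (A ^ d *ᵥ B)) = A ^ d *ᵥ B := by
    rw [Matrix.mulVec_mulVec, Matrix.mul_nonsing_inv _ hdet, Matrix.one_mulVec]
  rw [Matrix.mul_assoc, mul_krylov_eq_krylov_mul_companion A B hc,
    Matrix.nonsing_inv_mul_cancel_left _ _ hdet]
end

section
/- Let ω = exp(-2πi/ℓ) and A ∈ ℂ^{d×d}, B ∈ ℂ^{d}, C ∈ ℂ^{1×d}, and suppose I - Aω^m is invertible for all m = 0,…,ℓ-1. Define F^y ∈ ℂ^ℓ with F^y[j] = C A^j B. Then the discrete Fourier transform of F^y satisfies 𝔽(F^y)[m] = C (I - A^ℓ)(I - A ω^m)^{-1} B for each m. -/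
/-!
Since `ω ^ ℓ = 1`, the power `A ^ ℓ` equals `(ω ^ m • A) ^ ℓ`, so the geometric series
`∑_{j<ℓ} (ω ^ m • A) ^ j` is `(1 - A ^ ℓ) (1 - ω ^ m • A)⁻¹`; pairing it with `C` and `B`
term by term gives the DFT of `j ↦ C A ^ j B`.
-/

open Matrix

namespace Matrix

variable {n R : Type*} [Fintype n] [DecidableEq n] [CommRing R]

theorem one_sub_pow_mul_inv_one_sub {M : Matrix n n R} (hM : IsUnit (1 - M)) (ℓ : ℕ) :
    (1 - M ^ ℓ) * (1 - M)⁻¹ = ∑ j ∈ Finset.range ℓ, M ^ j := by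
  rw [← geom_sum_mul_neg, mul_assoc, mul_nonsing_inv _ ((isUnit_iff_isUnit_det _).mp hM),
    mul_one]

theorem sum_dotProduct_pow_mulVec_mul_pow {A : Matrix n n R} (B C : n → R) {x : R} {ℓ : ℕ}
    (hx : x ^ ℓ = 1) (hA : IsUnit (1 - x • A)) :
    ∑ j ∈ Finset.range ℓ, C ⬝ᵥ (A ^ j *ᵥ B) * x ^ j =
      C ⬝ᵥ (((1 - A ^ ℓ) * (1 - x • A)⁻¹) *ᵥ B) := by
  have hpow : (x • A) ^ ℓ = A ^ ℓ := by rw [smul_pow, hx, one_smul]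
  rw [← hpow, one_sub_pow_mul_inv_one_sub hA, sum_mulVec, dotProduct_sum]
  refine Finset.sum_congr rfl fun j _ => ?_
  rw [smul_pow, smul_mulVec, dotProduct_smul, smul_eq_mul, mul_comm]

end Matrix

theorem Complex.exp_neg_two_pi_I_div_pow_self {ℓ : ℕ} (hℓ : 0 < ℓ) :
    Complex.exp (-(2 * Real.pi * Complex.I) / ℓ) ^ ℓ = 1 := by
  rw [neg_div, Complex.exp_neg]
  exact (Complex.isPrimitiveRoot_exp ℓ hℓ.ne').inv.pow_eq_one

/-- The DFT of the output filter `F^y[j] = C A^j B` satisfies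
`𝔽(F^y)[m] = C (I - A^ℓ)(I - A ω^m)⁻¹ B` where `ω = exp(-2πi/ℓ)`. -/
theorem stmt_12 (ℓ d : ℕ) (hℓ : 0 < ℓ)
    (A : Matrix (Fin d) (Fin d) ℂ) (B C : Fin d → ℂ)
    (hinv : ∀ m : ℕ, IsUnit (1 - (Complex.exp (-(2 * Real.pi * Complex.I) / ℓ)) ^ m • A)) :
    ∀ m < ℓ,
      ∑ j ∈ Finset.range ℓ,
          (C ⬝ᵥ (A ^ j).mulVec B) *
            (Complex.exp (-(2 * Real.pi * Complex.I) / ℓ)) ^ (m * j) =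
        C ⬝ᵥ (((1 - A ^ ℓ) *
            (1 - (Complex.exp (-(2 * Real.pi * Complex.I) / ℓ)) ^ m • A)⁻¹).mulVec B) := by
  intro m _
  have hω : (Complex.exp (-(2 * Real.pi * Complex.I) / ℓ) ^ m) ^ ℓ = 1 := by
    rw [pow_right_comm, Complex.exp_neg_two_pi_I_div_pow_self hℓ, one_pow]
  simp only [pow_mul]
  exact sum_dotProduct_pow_mulVec_mul_pow B C hω (hinv m)
end
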